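/- Let R be a commutative Bézout ring. Then R is zero-adequate if and only if R is feckly zero-adequate and every idempotent lifts modulo J(R). -/
import Mathlib


open Ideal

/-- The Jacobson radical of a commutative ring, as an ideal. -/
abbrev jacR (R : Type*) [CommRing R] : Ideal R := (⊥ : Ideal R).jacobson

/-- An element `c` is adequate. -/
def Adequate {R : Type*} [CommRing R] (c : R) : Prop :=
  ∀ a : R, ∃ r s : R, c = r * s ∧ (∃ x y : R, r * x + a * y = 1) ∧
    ∀ s' : R, s' ∣ s → ¬IsUnit s' → ¬∃ x y : R, s' * x + a * y = 1

/-- An element `c` is feckly adequate. -/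
def FecklyAdequate {R : Type*} [CommRing R] (c : R) : Prop :=
  ∀ a : R, ∃ r s : R, c - r * s ∈ jacR R ∧ (∃ x y : R, r * x + a * y = 1) ∧
    ∀ s' : R, s' ∣ s → ¬IsUnit s' → ¬∃ x y : R, s' * x + a * y = 1

/-- Feckly zero-adequate: for every `a` there are `r, s` with `r*s ∈ J(R)`,
`rR + aR = R`, and `s'R + aR ≠ R` for every non-invertible divisor `s'` of `s`. -/
def FecklyZeroAdequateBody (R : Type*) [CommRing R] : Prop :=
  ∀ a : R, ∃ r s : R, r * s ∈ jacR R ∧ (∃ x y : R, r * x + a * y = 1) ∧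
    ∀ s' : R, s' ∣ s → ¬IsUnit s' → ¬∃ x y : R, s' * x + a * y = 1

/-- Zero-adequate body: same with `r*s = 0`. -/
def ZeroAdequateBody (R : Type*) [CommRing R] : Prop :=
  ∀ a : R, ∃ r s : R, r * s = 0 ∧ (∃ x y : R, r * x + a * y = 1) ∧
    ∀ s' : R, s' ∣ s → ¬IsUnit s' → ¬∃ x y : R, s' * x + a * y = 1

/-- A feckly zero-adequate ring is a Bézout ring whose zero is feckly adequate. -/
def FecklyZeroAdequateRing (R : Type*) [CommRing R] : Prop :=
  IsBezout R ∧ FecklyZeroAdequateBody R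

/-- π-regularity. -/
def PiRegular (S : Type*) [CommRing S] : Prop :=
  ∀ a : S, ∃ n : ℕ, 1 ≤ n ∧ ∃ b : S, a ^ n = a ^ n * b * a ^ n

/-- von Neumann regularity. -/
def VNRegular (S : Type*) [CommRing S] : Prop :=
  ∀ a : S, ∃ b : S, a = a * b * a

/-- Idempotents lift modulo the Jacobson radical. -/
def IdempotentsLift (R : Type*) [CommRing R] : Prop :=
  ∀ x : R, x - x ^ 2 ∈ jacR R → ∃ e : R, e * e = e ∧ e - x ∈ jacR R

/-- Membership in `jacR` is membership in every maximal ideal. -/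
lemma mem_jacR_iff {R : Type*} [CommRing R] {x : R} :
    x ∈ jacR R ↔ ∀ M : Ideal R, M.IsMaximal → x ∈ M := by
  constructor
  · intro hx M hM
    exact (Ideal.mem_sInf.mp hx) ⟨bot_le, hM⟩
  · intro h
    exact Ideal.mem_sInf.mpr (fun {I} hI => h I hI.2)

/-- Coprimality characterized by maximal ideals. -/
lemma coprime_iff_max {R : Type*} [CommRing R] {r a : R} :
    (∃ x y : R, r * x + a * y = 1) ↔
      ∀ M : Ideal R, M.IsMaximal → r ∉ M ∨ a ∉ M := by
  constructor
  · rintro ⟨x, y, hxy⟩ M hM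
    by_contra hc
    push_neg at hc
    exact hM.ne_top (Ideal.eq_top_iff_one M |>.mpr
      (hxy ▸ add_mem (Ideal.mul_mem_right _ _ hc.1) (Ideal.mul_mem_right _ _ hc.2)))
  · intro h
    have htop : Ideal.span ({r, a} : Set R) = ⊤ := by
      by_contra hne
      obtain ⟨M, hM, hle⟩ := Ideal.exists_le_maximal _ hne
      rcases h M hM with hr | ha
      · exact hr (hle (Ideal.subset_span (by simp)))
      · exact ha (hle (Ideal.subset_span (by simp)))
    obtain ⟨x, y, hxy⟩ := Ideal.mem_span_pair.mp
      (htop ▸ Submodule.mem_top : (1 : R) ∈ Ideal.span ({r, a} : Set R))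
    exact ⟨x, y, by linear_combination hxy⟩

/-- In a Bézout ring, if `r` is coprime to `a` and every non-unit divisor of `s`
fails to be coprime to `a`, then `r` and `s` are comaximal. -/
lemma bezout_comax {R : Type*} [CommRing R] [IsBezout R] {r s a : R}
    (hr : ∃ x y : R, r * x + a * y = 1)
    (hs : ∀ s' : R, s' ∣ s → ¬IsUnit s' → ¬∃ x y : R, s' * x + a * y = 1) :
    ∃ p q : R, r * p + s * q = 1 := by
  set d := IsBezout.gcd r s with hd
  have hdr : d ∣ r := IsBezout.gcd_dvd_left r s
  have hds : d ∣ s := IsBezout.gcd_dvd_right r s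
  have hdu : IsUnit d := by
    by_contra hdu
    apply hs d hds hdu
    obtain ⟨t, ht⟩ := hdr
    obtain ⟨x, y, hxy⟩ := hr
    exact ⟨t * x, y, by rw [ht] at hxy; linear_combination hxy⟩
  have htop : Ideal.span ({r, s} : Set R) = ⊤ := by
    rw [← IsBezout.span_gcd, Ideal.span_singleton_eq_top]
    exact hdu
  obtain ⟨p, q, hpq⟩ := Ideal.mem_span_pair.mp
    (htop ▸ Submodule.mem_top : (1 : R) ∈ Ideal.span ({r, s} : Set R))
  exact ⟨p, q, by linear_combination hpq⟩

theorem stmt7 (R : Type*) [CommRing R] [IsBezout R] :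
    ZeroAdequateBody R ↔ FecklyZeroAdequateBody R ∧ IdempotentsLift R := by
  constructor
  · intro h
    constructor
    · -- zero-adequate implies feckly zero-adequate
      intro a
      obtain ⟨r, s, h0, hra, hC⟩ := h a
      exact ⟨r, s, by rw [h0]; exact zero_mem _, hra, hC⟩
    · -- idempotents lift
      intro x hx
      obtain ⟨r, s, hrs, hra, hC⟩ := h x
      obtain ⟨p, q, hpq⟩ := bezout_comax hra hC
      obtain ⟨α, β, hαβ⟩ := bezout_comax (r := 1 - x) (a := x) (s := s)
        ⟨1, 1, by ring⟩ hC
      refine ⟨s * q, by linear_combination (s * q) * hpq - (q * p) * hrs, ?_⟩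
      rw [mem_jacR_iff]
      intro M hM
      have hprime : M.IsPrime := hM.isPrime
      have hx1x : x * (1 - x) ∈ M := by
        have := mem_jacR_iff.mp hx M hM
        have hxx : x * (1 - x) = x - x ^ 2 := by ring
        rwa [hxx]
      by_cases hrM : r ∈ M
      · -- x ≡ 1 mod M, e ≡ 1 mod M
        have hxM : x ∉ M := by
          intro hxm
          rcases coprime_iff_max.mp hra M hM with h1 | h2
          · exact h1 hrM
          · exact h2 hxm
        have h1x : (1 : R) - x ∈ M := (hprime.mem_or_mem hx1x).resolve_left hxM
        have : s * q - 1 ∈ M := by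
          have : s * q - 1 = -(r * p) := by linear_combination hpq
          rw [this]
          exact neg_mem (Ideal.mul_mem_right _ _ hrM)
        have := add_mem this h1x
        have heq : s * q - 1 + (1 - x) = s * q - x := by ring
        rwa [heq] at this
      · -- s ∈ M, x ∈ M, e ∈ M
        have hsM : s ∈ M := by
          have h0M : r * s ∈ M := by rw [hrs]; exact zero_mem _
          exact (hprime.mem_or_mem h0M).resolve_left hrM
        have h1xM : (1 : R) - x ∉ M := by
          intro h1x
          apply hM.ne_top
          rw [Ideal.eq_top_iff_one]
          have : (1 : R) = (1 - x) * α + s * β := hαβ.symm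
          rw [this]
          exact add_mem (Ideal.mul_mem_right _ _ h1x) (Ideal.mul_mem_right _ _ hsM)
        have hxM : x ∈ M := (hprime.mem_or_mem hx1x).resolve_right h1xM
        exact sub_mem (Ideal.mul_mem_right _ _ hsM) hxM
  · -- backward direction
    rintro ⟨hF, hL⟩ a
    obtain ⟨r, s, hrs, hra, hC⟩ := hF a
    obtain ⟨p, q, hpq⟩ := bezout_comax hra hC
    have hw : s * q - (s * q) ^ 2 ∈ jacR R := by
      have heq : s * q - (s * q) ^ 2 = (r * s) * (p * q) := by linear_combination (-(s * q)) * hpq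
      rw [heq]
      exact Ideal.mul_mem_right _ _ hrs
    obtain ⟨e, he2, heJ⟩ := hL (s * q) hw
    refine ⟨1 - e, s * e, by linear_combination (-s) * he2, ?_, ?_⟩
    · -- coprimality of 1 - e and a
      rw [coprime_iff_max]
      intro M hM
      by_contra hc
      push_neg at hc
      obtain ⟨heM, haM⟩ := hc
      have hrM : r ∉ M := by
        rcases coprime_iff_max.mp hra M hM with h1 | h2
        · exact h1
        · exact absurd haM h2
      have hsM : s ∈ M :=
        (hM.isPrime.mem_or_mem (mem_jacR_iff.mp hrs M hM)).resolve_left hrM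
      have heM' : e ∈ M := by
        have h1 : e - s * q ∈ M := mem_jacR_iff.mp heJ M hM
        have := add_mem h1 (Ideal.mul_mem_right q _ hsM)
        simpa using this
      exact hM.ne_top (Ideal.eq_top_iff_one M |>.mpr
        (by have := add_mem heM heM'; simpa using this))
    · -- divisor condition for s * e
      intro s' hdvd hnu hcop
      obtain ⟨d', hd'⟩ := hdvd
      -- gcd of s' and s is a unit
      have hcom : ∃ α β : R, s' * α + s * β = 1 := by
        set d := IsBezout.gcd s' s with hd
        have hds' : d ∣ s' := IsBezout.gcd_dvd_left s' s
        have hds : d ∣ s := IsBezout.gcd_dvd_right s' s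
        have hdu : IsUnit d := by
          by_contra hdu
          apply hC d hds hdu
          obtain ⟨t, ht⟩ := hds'
          obtain ⟨x, y, hxy⟩ := hcop
          exact ⟨t * x, y, by rw [ht] at hxy; linear_combination hxy⟩
        have htop : Ideal.span ({s', s} : Set R) = ⊤ := by
          rw [← IsBezout.span_gcd, Ideal.span_singleton_eq_top]
          exact hdu
        obtain ⟨α, β, hαβ⟩ := Ideal.mem_span_pair.mp
          (htop ▸ Submodule.mem_top : (1 : R) ∈ Ideal.span ({s', s} : Set R))
        exact ⟨α, β, by linear_combination hαβ⟩
      obtain ⟨α, β, hαβ⟩ := hcom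
      -- s' divides e
      have hs'e : s' ∣ e := by
        refine ⟨α * e + β * d', ?_⟩
        calc e = e * (s' * α + s * β) := by rw [hαβ]; ring
        _ = s' * (α * e) + (s * e) * β := by ring
        _ = s' * (α * e) + (s' * d') * β := by rw [hd']
        _ = s' * (α * e + β * d') := by ring
      -- a maximal ideal containing s'
      obtain ⟨M, hM, hle⟩ := Ideal.exists_le_maximal (Ideal.span {s'})
        (by rwa [ne_eq, Ideal.span_singleton_eq_top])
      have hs'M : s' ∈ M := hle (Ideal.subset_span rfl)
      have hsM : s ∉ M := by
        intro hsm
        exact hM.ne_top (Ideal.eq_top_iff_one M |>.mpr (hαβ ▸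
          add_mem (Ideal.mul_mem_right _ _ hs'M) (Ideal.mul_mem_right _ _ hsm)))
      have hrM : r ∈ M :=
        (hM.isPrime.mem_or_mem (mem_jacR_iff.mp hrs M hM)).resolve_right hsM
      have hsqM : s * q ∉ M := by
        intro hsq
        apply hM.ne_top
        rw [Ideal.eq_top_iff_one]
        have : (1 : R) = r * p + s * q := hpq.symm
        rw [this]
        exact add_mem (Ideal.mul_mem_right _ _ hrM) hsq
      have heM : e ∈ M := by
        obtain ⟨m, hm⟩ := hs'e
        rw [hm]
        exact Ideal.mul_mem_right _ _ hs'M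
      apply hsqM
      have h1 : e - s * q ∈ M := mem_jacR_iff.mp heJ M hM
      have := sub_mem heM h1
      simpa using this
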